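/- Suppose M₁,…,M_m are operators on ℂⁿ of the form Mᵢ = λPᵢ where the Pᵢ are rank-d orthogonal projections, Σᵢ Mᵢ = I, and for all i ≠ j, PᵢPⱼPᵢ = α²Pᵢ for a fixed α. Then, with m = n² and d such that the trace conditions hold, α² = (n²−2)/(2(n²−1)). -/
import Mathlib


open Matrix

lemma trace_eq_rank_aux {n : ℕ} (A : Matrix (Fin n) (Fin n) ℂ) (h : A * A = A) :
    A.trace = (A.rank : ℂ) := by
  have hproj : LinearMap.IsProj (LinearMap.range A.mulVecLin) A.mulVecLin := by
    constructor
    · intro x; exact LinearMap.mem_range_self _ x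
    · rintro x ⟨y, rfl⟩
      have h2 : A.mulVecLin ∘ₗ A.mulVecLin = A.mulVecLin := by
        rw [← Matrix.mulVecLin_mul, h]
      exact congrFun (congrArg DFunLike.coe h2) y
  have ht := hproj.trace
  rw [LinearMap.trace_eq_matrix_trace ℂ (Pi.basisFun ℂ (Fin n))] at ht
  simpa [Matrix.rank, LinearMap.toMatrix_eq_toMatrix', ← Matrix.toLin'_apply',
    LinearMap.toMatrix'_toLin'] using ht

/-- A strongly equiangular IC-POVM: if `M i = λ • P i` are `m = n²` scaled rank-`d`
orthogonal projections on `ℂⁿ` summing to the identity, pairwise satisfying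
`PᵢPⱼPᵢ = α²Pᵢ` with a fixed `α > 0`, and `d = n/2` (as forced by strong
equiangularity), then `α² = (n²−2)/(2(n²−1))`. -/
theorem stmt_19 {n m d : ℕ} (hn : 1 < n) (hd : 0 < d) (hm : m = n^2)
    (hdn : 2 * d = n)
    (P : Fin m → Matrix (Fin n) (Fin n) ℂ) (lam : ℝ) (hlam : 0 < lam)
    (hherm : ∀ i, (P i).IsHermitian) (hidem : ∀ i, P i * P i = P i)
    (hrank : ∀ i, (P i).rank = d)
    (hsum : ∑ i, (lam : ℂ) • P i = 1)
    (α : ℝ) (hα : 0 < α)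
    (hangle : ∀ i j, i ≠ j → P i * P j * P i = ((α : ℂ)^2) • P i) :
    α^2 = ((n : ℝ)^2 - 2) / (2 * ((n : ℝ)^2 - 1)) := by
  have htr : ∀ i, (P i).trace = (d : ℂ) := fun i => by
    rw [trace_eq_rank_aux (P i) (hidem i), hrank i]
  -- trace of the sum condition
  have e1 : (lam : ℂ) * m * d = n := by
    have h := congrArg Matrix.trace hsum
    rw [Matrix.trace_sum, Matrix.trace_one] at h
    simp only [Matrix.trace_smul, htr, smul_eq_mul, Finset.sum_const,
      Finset.card_univ, Fintype.card_fin, nsmul_eq_mul] at h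
    simpa [mul_comm, mul_assoc, mul_left_comm] using h
  -- off-diagonal traces
  have hoff : ∀ i j, i ≠ j → ((P i) * (P j)).trace = (α:ℂ)^2 * d := by
    intro i j hij
    have h1 : (P i * P j * P i).trace = (α:ℂ)^2 * d := by
      rw [hangle i j hij, Matrix.trace_smul, htr, smul_eq_mul]
    rw [Matrix.trace_mul_cycle, hidem i] at h1
    exact h1
  -- diagonal traces
  have hdiag : ∀ i, ((P i) * (P i)).trace = (d : ℂ) := fun i => by
    rw [hidem i, htr i]
  -- square of the sum condition
  have hsq : (∑ i, (lam:ℂ) • P i) * (∑ j, (lam:ℂ) • P j) = 1 := by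
    rw [hsum]; simp
  have e2 : (lam:ℂ)^2 * (m * ((d:ℂ) + ((m:ℂ)-1) * ((α:ℂ)^2 * d))) = n := by
    have h := congrArg Matrix.trace hsq
    rw [Matrix.trace_one, Fintype.card_fin] at h
    rw [Finset.sum_mul_sum] at h
    have hlhs : (∑ i, ∑ j, ((lam:ℂ) • P i) * ((lam:ℂ) • P j)).trace
        = (lam:ℂ)^2 * (m * ((d:ℂ) + ((m:ℂ)-1) * ((α:ℂ)^2 * d))) := by
      rw [Matrix.trace_sum]
      have hin : ∀ i : Fin m, (∑ j, ((lam:ℂ) • P i) * ((lam:ℂ) • P j)).trace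
          = (lam:ℂ)^2 * ((d:ℂ) + ((m:ℂ)-1) * ((α:ℂ)^2 * d)) := by
        intro i
        rw [Matrix.trace_sum]
        have : ∀ j : Fin m, (((lam:ℂ) • P i) * ((lam:ℂ) • P j)).trace
            = (lam:ℂ)^2 * ((P i) * (P j)).trace := by
          intro j
          rw [smul_mul_assoc, mul_smul_comm, smul_smul, Matrix.trace_smul, smul_eq_mul]
          ring
        simp_rw [this]
        rw [← Finset.mul_sum]
        congr 1
        rw [← Finset.add_sum_erase _ _ (Finset.mem_univ i), hdiag i]
        congr 1
        rw [Finset.sum_congr rfl (fun j hj => hoff i j (Finset.ne_of_mem_erase hj).symm),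
          Finset.sum_const, Finset.card_erase_of_mem (Finset.mem_univ i),
          Finset.card_univ, Fintype.card_fin, nsmul_eq_mul]
        have hm1 : 1 ≤ m := by
          rw [hm]; exact Nat.one_le_pow 2 n (by omega)
        push_cast [Nat.cast_sub hm1]
        ring
      simp_rw [hin]
      rw [Finset.sum_const, Finset.card_univ, Fintype.card_fin, nsmul_eq_mul]
      ring
    rw [hlhs] at h
    exact h
  -- pass to the reals
  have e1' : lam * (m:ℝ) * (d:ℝ) = (n:ℝ) := by exact_mod_cast e1
  have e2' : lam^2 * ((m:ℝ) * ((d:ℝ) + ((m:ℝ)-1) * (α^2 * (d:ℝ)))) = (n:ℝ) := by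
    exact_mod_cast e2
  set N : ℝ := (n:ℝ) with hN
  have hN2 : (2:ℝ) ≤ N := by have h2 : 2 ≤ n := hn; rw [hN]; exact_mod_cast h2
  have hN0 : N ≠ 0 := by linarith
  have hmr : (m:ℝ) = N^2 := by rw [hm]; push_cast; ring
  have hdr : (d:ℝ) = N / 2 := by
    have : 2 * (d:ℝ) = N := by have := congrArg (Nat.cast : ℕ → ℝ) hdn; push_cast at this; linarith
    linarith
  rw [hmr, hdr] at e1' e2'
  have hl : lam * N^2 = 2 := by
    apply mul_right_cancel₀ hN0
    nlinarith [e1']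
  have h4 : lam^2 * N^4 = 4 := by nlinarith [hl]
  have key : 2 * (1 + (N^2-1)*α^2) = N^2 := by
    have h5 : lam^2 * (N^2 * (N/2 + (N^2-1) * (α^2 * (N/2)))) * N = N * N := by
      rw [e2']
    linear_combination h5 - ((1+(N^2-1)*α^2)/2) * h4
  have hden : 2 * (N^2 - 1) ≠ 0 := by nlinarith
  rw [eq_div_iff hden]
  linarith [key]
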